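/- arXiv:1908.10733 — 6 statements merged into one kernel-verified Lean document; each statement's English description precedes it below -/
import Mathlib

section
/- Let A and B be C*-algebras, let ε ≥ 0, and let π : A → B be a bounded ℂ-linear map which is star-preserving and ε-multiplicative. Then ‖π(a)‖ ≤ (1 + ε)·‖a‖ for every a ∈ A. -/
/-- If `f : A → B` is a bounded `ℂ`-linear, star-preserving, `ε`-multiplicative
map between C*-algebras, then `‖f a‖ ≤ (1 + ε) * ‖a‖` for all `a`. -/
theorem almost_star_hom_norm_bound {A B : Type*}
    [NonUnitalCStarAlgebra A] [NonUnitalCStarAlgebra B]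
    (ε : ℝ) (hε : 0 ≤ ε) (f : A →L[ℂ] B)
    (hstar : ∀ a : A, f (star a) = star (f a))
    (hmul : ∀ a b : A, ‖f (a * b) - f a * f b‖ ≤ ε * ‖a‖ * ‖b‖) :
    ∀ a : A, ‖f a‖ ≤ (1 + ε) * ‖a‖ := by
  set N := ‖f‖ with hN
  have hN0 : 0 ≤ N := norm_nonneg f
  have key : ∀ a : A, ‖f a‖ ^ 2 ≤ (N + ε) * ‖a‖ ^ 2 := by
    intro a
    have h1 : ‖f a‖ ^ 2 = ‖star (f a) * f a‖ := (CStarRing.norm_star_mul_self (x := f a)).symm ▸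
      (sq ‖f a‖)
    have h2 : star (f a) * f a = f (star a * a) - (f (star a * a) - f (star a) * f a) := by
      rw [hstar a, sub_sub_cancel]
    calc ‖f a‖ ^ 2 = ‖f (star a * a) - (f (star a * a) - f (star a) * f a)‖ := by
          rw [h1, h2]
      _ ≤ ‖f (star a * a)‖ + ‖f (star a * a) - f (star a) * f a‖ := norm_sub_le _ _
      _ ≤ N * ‖star a * a‖ + ε * ‖star a‖ * ‖a‖ := by
          gcongr
          · exact f.le_opNorm _
          · exact hmul _ _
      _ ≤ (N + ε) * ‖a‖ ^ 2 := by
          rw [CStarRing.norm_star_mul_self, norm_star]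
          ring_nf
          nlinarith [norm_nonneg a]
  have hNle : N ≤ Real.sqrt (N + ε) := by
    apply f.opNorm_le_bound (Real.sqrt_nonneg _)
    intro a
    have := key a
    have h : ‖f a‖ ≤ Real.sqrt ((N + ε) * ‖a‖ ^ 2) := by
      rw [← Real.sqrt_sq (norm_nonneg (f a))]
      exact Real.sqrt_le_sqrt this
    rwa [Real.sqrt_mul (by positivity), Real.sqrt_sq (norm_nonneg a)] at h
  have hsq : N ^ 2 ≤ N + ε := by
    have := Real.sq_sqrt (by positivity : (0:ℝ) ≤ N + ε)
    nlinarith [Real.sqrt_nonneg (N + ε)]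
  have hfin : N ≤ 1 + ε := by nlinarith
  intro a
  calc ‖f a‖ ≤ N * ‖a‖ := f.le_opNorm a
    _ ≤ (1 + ε) * ‖a‖ := by gcongr
end

section
/- Let A and B be unital C*-algebras, let ε, δ ≥ 0, and let π : A → B be a bounded ℂ-linear map which is star-preserving, ε-multiplicative, and unital (π(1) = 1). If u ∈ A satisfies ‖u*·u − 1‖ ≤ δ and ‖u·u* − 1‖ ≤ δ, then ‖π(u)*·π(u) − 1‖ ≤ ε + (1 + 3ε)·δ and ‖π(u)·π(u)* − 1‖ ≤ ε + (1 + 3ε)·δ. -/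
/-!
For self-adjoint `x` the C*-identity gives `‖f x‖ ^ 2 = ‖f x * f x‖ ≤ ‖f (x * x)‖ + ε * ‖x‖ ^ 2`,
so the norm `M` of `f` restricted to the real space of self-adjoint elements satisfies
`M ^ 2 ≤ M + ε`, hence `M ≤ 1 + ε`. Then `star (f v) * f v - 1` differs from
`f (star v * v - 1)`, of norm at most `(1 + ε) * δ`, by the multiplicativity defect
`ε * ‖v‖ ^ 2 ≤ ε * (1 + δ)`.
-/

section NonUnital

variable {A B : Type*} [NonUnitalNormedRing A] [StarRing A] [NormedSpace ℂ A]
  [NonUnitalNormedRing B] [StarRing B] [CStarRing B] [NormedSpace ℂ B]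
  {ε : ℝ} {f : A →L[ℂ] B}

lemma norm_map_sq_le_of_isSelfAdjoint (hstar : ∀ a, f (star a) = star (f a))
    (hmul : ∀ a b : A, ‖f (a * b) - f a * f b‖ ≤ ε * ‖a‖ * ‖b‖) {x : A} (hx : IsSelfAdjoint x) :
    ‖f x‖ ^ 2 ≤ ‖f (x * x)‖ + ε * ‖x‖ ^ 2 := by
  have hfx : IsSelfAdjoint (f x) := by rw [IsSelfAdjoint, ← hstar, hx.star_eq]
  calc ‖f x‖ ^ 2 = ‖f x * f x‖ := hfx.norm_mul_self.symm
    _ ≤ ‖f (x * x)‖ + ‖f (x * x) - f x * f x‖ := norm_le_norm_add_norm_sub _ _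
    _ ≤ ‖f (x * x)‖ + ε * ‖x‖ ^ 2 := by grw [hmul]; rw [mul_assoc, sq]

lemma norm_map_le_of_isSelfAdjoint [StarModule ℂ A] (hε : 0 ≤ ε)
    (hstar : ∀ a, f (star a) = star (f a))
    (hmul : ∀ a b : A, ‖f (a * b) - f a * f b‖ ≤ ε * ‖a‖ * ‖b‖) {x : A} (hx : IsSelfAdjoint x) :
    ‖f x‖ ≤ (1 + ε) * ‖x‖ := by
  set g : selfAdjoint.submodule ℝ A →L[ℝ] B :=
    (f.restrictScalars ℝ).comp (selfAdjoint.submodule ℝ A).subtypeL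
  have hg_sqrt : ‖g‖ ≤ √(‖g‖ + ε) := by
    refine g.opNorm_le_bound (Real.sqrt_nonneg _) fun y => ?_
    have hy : IsSelfAdjoint (y : A) := y.2
    have hfyy : ‖f (y * y)‖ ≤ ‖g‖ * ‖(y : A)‖ ^ 2 := by
      calc ‖f (y * y)‖ ≤ ‖g‖ * ‖(y : A) * y‖ := g.le_opNorm ⟨_, (hy.commute_iff hy).mp rfl⟩
        _ ≤ ‖g‖ * ‖(y : A)‖ ^ 2 := by grw [norm_mul_le, ← sq]
    refine (pow_le_pow_iff_left₀ (norm_nonneg _) (by positivity) two_ne_zero).mp ?_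
    rw [mul_pow, Real.sq_sqrt (by positivity)]
    calc ‖f y‖ ^ 2 ≤ ‖f (y * y)‖ + ε * ‖(y : A)‖ ^ 2 :=
          norm_map_sq_le_of_isSelfAdjoint hstar hmul hy
      _ ≤ (‖g‖ + ε) * ‖(y : A)‖ ^ 2 := by linarith
  have hg : ‖g‖ ≤ 1 + ε := by
    have := (Real.le_sqrt (norm_nonneg g) (by positivity)).mp hg_sqrt
    nlinarith [norm_nonneg g]
  calc ‖f x‖ = ‖g ⟨x, hx⟩‖ := rfl
    _ ≤ ‖g‖ * ‖x‖ := g.le_opNorm _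
    _ ≤ (1 + ε) * ‖x‖ := by gcongr

end NonUnital

lemma CStarRing.norm_one_le (A : Type*) [NormedRing A] [StarRing A] [CStarRing A] :
    ‖(1 : A)‖ ≤ 1 := by
  rcases subsingleton_or_nontrivial A with _ | _
  · simp [Subsingleton.elim (1 : A) 0]
  · exact CStarRing.norm_one.le

section Unital

variable {A B : Type*} [CStarAlgebra A] [CStarAlgebra B] {ε δ : ℝ} {f : A →L[ℂ] B}

lemma norm_sq_le_of_norm_star_mul_self_sub_one_le {v : A} (hv : ‖star v * v - 1‖ ≤ δ) :
    ‖v‖ ^ 2 ≤ 1 + δ := by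
  calc ‖v‖ ^ 2 = ‖star v * v‖ := by rw [CStarRing.norm_star_mul_self, sq]
    _ ≤ ‖(1 : A)‖ + ‖star v * v - 1‖ := norm_le_norm_add_norm_sub' _ _
    _ ≤ 1 + δ := by grw [CStarRing.norm_one_le, hv]

lemma norm_star_map_mul_map_sub_one_le (hε : 0 ≤ ε) (hstar : ∀ a, f (star a) = star (f a))
    (hmul : ∀ a b : A, ‖f (a * b) - f a * f b‖ ≤ ε * ‖a‖ * ‖b‖) (hone : f 1 = 1) {v : A}
    (hv : ‖star v * v - 1‖ ≤ δ) :
    ‖star (f v) * f v - 1‖ ≤ ε + (1 + 2 * ε) * δ := by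
  have hself : IsSelfAdjoint (star v * v - 1) := (IsSelfAdjoint.star_mul_self v).sub (.one A)
  have hdefect : ‖f (star v * v - 1)‖ ≤ (1 + ε) * δ :=
    (norm_map_le_of_isSelfAdjoint hε hstar hmul hself).trans (by gcongr)
  have hsplit : star (f v) * f v - 1 =
      f (star v * v - 1) - (f (star v * v) - f (star v) * f v) := by
    rw [map_sub, hone, hstar]; abel
  calc ‖star (f v) * f v - 1‖ ≤ (1 + ε) * δ + ε * ‖v‖ ^ 2 := by
        grw [hsplit, norm_sub_le, hdefect, hmul, norm_star, mul_assoc, ← sq]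
    _ ≤ (1 + ε) * δ + ε * (1 + δ) := by grw [norm_sq_le_of_norm_star_mul_self_sub_one_le hv]
    _ = ε + (1 + 2 * ε) * δ := by ring

end Unital

theorem almost_star_hom_map_almost_unitary_general {A B : Type*}
    [CStarAlgebra A] [CStarAlgebra B]
    (ε δ : ℝ) (hε : 0 ≤ ε) (f : A →L[ℂ] B)
    (hstar : ∀ a : A, f (star a) = star (f a))
    (hmul : ∀ a b : A, ‖f (a * b) - f a * f b‖ ≤ ε * ‖a‖ * ‖b‖)
    (hone : f 1 = 1)
    (u : A) (hu1 : ‖star u * u - 1‖ ≤ δ) (hu2 : ‖u * star u - 1‖ ≤ δ) :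
    ‖star (f u) * f u - 1‖ ≤ ε + (1 + 3 * ε) * δ ∧
      ‖f u * star (f u) - 1‖ ≤ ε + (1 + 3 * ε) * δ := by
  have hδ : 0 ≤ δ := (norm_nonneg _).trans hu1
  have hweaken : ε + (1 + 2 * ε) * δ ≤ ε + (1 + 3 * ε) * δ := by nlinarith
  constructor
  · exact (norm_star_map_mul_map_sub_one_le hε hstar hmul hone hu1).trans hweaken
  · have h := norm_star_map_mul_map_sub_one_le hε hstar hmul hone (δ := δ) (v := star u)
      (by rwa [star_star])
    rw [hstar, star_star] at h
    exact h.trans hweaken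

/-- A unital star-preserving `ε`-multiplicative bounded linear map between unital
C*-algebras sends quantitative unitaries to quantitative unitaries. -/
theorem almost_star_hom_map_almost_unitary {A B : Type*}
    [CStarAlgebra A] [CStarAlgebra B]
    (ε δ : ℝ) (hε : 0 ≤ ε) (hδ : 0 ≤ δ) (f : A →L[ℂ] B)
    (hstar : ∀ a : A, f (star a) = star (f a))
    (hmul : ∀ a b : A, ‖f (a * b) - f a * f b‖ ≤ ε * ‖a‖ * ‖b‖)
    (hone : f 1 = 1)
    (u : A) (hu1 : ‖star u * u - 1‖ ≤ δ) (hu2 : ‖u * star u - 1‖ ≤ δ) :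
    ‖star (f u) * f u - 1‖ ≤ ε + (1 + 3 * ε) * δ ∧
      ‖f u * star (f u) - 1‖ ≤ ε + (1 + 3 * ε) * δ :=
  almost_star_hom_map_almost_unitary_general ε δ hε f hstar hmul hone u hu1 hu2
end

section
/- Let A be a unital C*-algebra, let u ∈ A be a unitary, let 0 ≤ ε ≤ 1/10, and let a ∈ A satisfy ‖a − u‖ ≤ ε. Then a is invertible, a*·a is a positive invertible element with ‖a*·a − 1‖ ≤ 2ε + ε², and the element b := a·(a*·a)^{−1/2} (the inverse square root taken by continuous functional calculus) is a unitary with ‖b − u‖ ≤ 3ε. -/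
/-!
Since `‖u⋆a - 1‖ = ‖a - u‖ < 1`, `a` is invertible. The identity
`a⋆a - 1 = (a - u)⋆(a - u) + (a - u)⋆u + u⋆(a - u)` gives `‖a⋆a - 1‖ ≤ δ := 2ε + ε²`, so the
spectrum of `c = a⋆a` lies in `[1 - δ, 1 + δ]` and the functional calculus bounds
`‖c^(-1/2) - 1‖` by `(1 - δ)^(-1/2) - 1`. The polar part `b = a c^(-1/2)` is invertible with
`b⋆b = c^(-1/2) c c^(-1/2) = 1`, hence unitary, and `b - u = (a - u) c^(-1/2) + u (c^(-1/2) - 1)`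
yields `‖b - u‖ ≤ (1 + ε)(1 - δ)^(-1/2) - 1 ≤ 3ε`.
-/

lemma abs_inv_sqrt_sub_one_le {x δ : ℝ} (hδ : δ < 1) (hx : |x - 1| ≤ δ) :
    |(√x)⁻¹ - 1| ≤ (√(1 - δ))⁻¹ - 1 := by
  obtain ⟨hxl, hxr⟩ := abs_le.mp hx
  have hs : 0 < √(1 - δ) := Real.sqrt_pos.mpr (by linarith)
  have hys : √(1 - δ) ≤ √x := Real.sqrt_le_sqrt (by linarith)
  have hy : 0 < √x := hs.trans_le hys
  have hsq : √x ^ 2 + √(1 - δ) ^ 2 ≤ 2 := by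
    rw [Real.sq_sqrt (by linarith), Real.sq_sqrt (by linarith)]; linarith
  refine abs_le.mpr ⟨?_, by gcongr⟩
  -- From `y² + s² ≤ 2` we get `y + s ≤ 2`, hence `2ys ≤ (y + s)² / 2 ≤ y + s`, i.e. `1/y + 1/s ≥ 2`.
  have hsum : √x + √(1 - δ) ≤ 2 := by nlinarith [sq_nonneg (√x - √(1 - δ))]
  have hprod : 2 * (√x * √(1 - δ)) ≤ √x + √(1 - δ) := by nlinarith [sq_nonneg (√x - √(1 - δ))]
  have h2 : 2 ≤ (√x)⁻¹ + (√(1 - δ))⁻¹ := by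
    rw [inv_add_inv hy.ne' hs.ne', le_div_iff₀ (mul_pos hy hs)]; linarith
  linarith

lemma one_add_mul_inv_sqrt_le {ε : ℝ} (hε0 : 0 ≤ ε) (hε : ε ≤ 1 / 10) :
    (1 + ε) * (√(1 - (2 * ε + ε ^ 2)))⁻¹ ≤ 1 + 3 * ε := by
  have hpos : 0 < 1 - (2 * ε + ε ^ 2) := by nlinarith
  rw [mul_inv_le_iff₀ (Real.sqrt_pos.mpr hpos), ← pow_le_pow_iff_left₀ (by positivity)
    (by positivity) two_ne_zero, mul_pow, Real.sq_sqrt hpos.le]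
  nlinarith [mul_nonneg hε0 hε0, mul_nonneg (mul_nonneg hε0 hε0) hε0]

lemma norm_sub_one_le_of_mem_spectrum {𝕜 A : Type*} [NormedField 𝕜] [NormedRing A]
    [NormedAlgebra 𝕜 A] [CompleteSpace A] [NormOneClass A] {a : A} {x : 𝕜}
    (hx : x ∈ spectrum 𝕜 a) : ‖x - 1‖ ≤ ‖a - 1‖ := by
  have : x - 1 ∈ spectrum 𝕜 (a - 1) := by
    rw [← map_one (algebraMap 𝕜 A), ← spectrum.sub_singleton_eq]
    exact Set.sub_mem_sub hx rfl
  exact spectrum.norm_le_norm_of_mem this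

section CStarAlgebra

variable {A : Type*} [CStarAlgebra A]

lemma isUnit_of_norm_sub_lt_one {u a : A} (hu : u ∈ unitary A) (ha : ‖a - u‖ < 1) :
    IsUnit a := by
  have hua : IsUnit (star u * a) := by
    have : star u * a = 1 - star u * (u - a) := by
      rw [mul_sub, Unitary.star_mul_self_of_mem hu, sub_sub_cancel]
    rw [this]
    apply isUnit_one_sub_of_norm_lt_one
    rwa [CStarRing.norm_mem_unitary_mul _ (Unitary.star_mem hu), norm_sub_rev]
  have : a = u * (star u * a) := by rw [← mul_assoc, Unitary.mul_star_self_of_mem hu, one_mul]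
  rw [this]
  exact Unitary.isUnit_coe (U := ⟨u, hu⟩) |>.mul hua

lemma norm_star_mul_self_sub_one_le {u : A} (hu : u ∈ unitary A) (a : A) :
    ‖star a * a - 1‖ ≤ ‖a - u‖ * (2 + ‖a - u‖) := by
  have hsplit : star a * a - 1 = star (a - u) * (a - u) + star (a - u) * u + star u * (a - u) := by
    rw [← Unitary.star_mul_self_of_mem hu, star_sub]; noncomm_ring
  rw [hsplit]
  calc _ ≤ ‖star (a - u) * (a - u)‖ + ‖star (a - u) * u‖ + ‖star u * (a - u)‖ := norm_add₃_le
    _ = ‖a - u‖ * (2 + ‖a - u‖) := by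
      rw [CStarRing.norm_star_mul_self, CStarRing.norm_mul_mem_unitary _ hu, norm_star,
        CStarRing.norm_mem_unitary_mul _ (Unitary.star_mem hu)]
      ring

lemma norm_mul_sub_unitary_le {u : A} (hu : u ∈ unitary A) (a r : A) :
    ‖a * r - u‖ ≤ ‖a - u‖ * (1 + ‖r - 1‖) + ‖r - 1‖ := by
  nontriviality A
  have hsplit : a * r - u = (a - u) * r + u * (r - 1) := by noncomm_ring
  have hr : ‖r‖ ≤ 1 + ‖r - 1‖ := by
    simpa [add_comm] using norm_le_norm_add_norm_sub' r 1
  rw [hsplit]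
  calc _ ≤ ‖(a - u) * r‖ + ‖u * (r - 1)‖ := norm_add_le _ _
    _ ≤ _ := by
      rw [CStarRing.norm_mem_unitary_mul _ hu]
      gcongr
      exact (norm_mul_le _ _).trans (by gcongr)

variable [PartialOrder A] [StarOrderedRing A]

lemma IsUnit.mul_rpow_neg_half_star_mul_self_mem_unitary {a : A} (ha : IsUnit a) :
    a * (star a * a) ^ (-(1 / 2) : ℝ) ∈ unitary A := by
  set c := star a * a
  have hc : IsStrictlyPositive c := (ha.star.mul ha).isStrictlyPositive (star_mul_self_nonneg a)
  have hr : IsSelfAdjoint (c ^ (-(1 / 2) : ℝ)) := .of_nonneg CFC.rpow_nonneg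
  refine (ha.mul (hc.isUnit.cfcRpow _)).mem_unitary_of_star_mul_self ?_
  calc star (a * c ^ (-(1 / 2) : ℝ)) * (a * c ^ (-(1 / 2) : ℝ))
      = c ^ (-(1 / 2) : ℝ) * c ^ (1 : ℝ) * c ^ (-(1 / 2) : ℝ) := by
        rw [star_mul, hr.star_eq, CFC.rpow_one c]; simp only [c, mul_assoc]
    _ = c ^ (1 / 2 : ℝ) * c ^ (-(1 / 2) : ℝ) := by rw [← CFC.rpow_add hc.isUnit]; norm_num
    _ = 1 := CFC.rpow_mul_rpow_neg _ hc

lemma norm_rpow_neg_half_sub_one_le {c : A} (hc : 0 ≤ c) {δ : ℝ} (hδ : δ < 1)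
    (hcδ : ‖c - 1‖ ≤ δ) : ‖c ^ (-(1 / 2) : ℝ) - 1‖ ≤ (√(1 - δ))⁻¹ - 1 := by
  have ht : 0 ≤ (√(1 - δ))⁻¹ - 1 := by
    have : √(1 - δ) ≤ 1 := Real.sqrt_le_one.mpr (by linarith [(norm_nonneg _).trans hcδ])
    linarith [one_le_inv₀ (Real.sqrt_pos.mpr (by linarith)) |>.mpr this]
  obtain _ | _ := subsingleton_or_nontrivial A
  · rwa [Subsingleton.elim (c ^ (-(1 / 2) : ℝ) - 1) 0, norm_zero]
  have hspec : ∀ x ∈ spectrum ℝ c, |x - 1| ≤ δ := fun x hx =>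
    (norm_sub_one_le_of_mem_spectrum hx).trans hcδ
  have hpos : ∀ x ∈ spectrum ℝ c, 0 < x := fun x hx => by
    linarith [(abs_le.mp (hspec x hx)).1]
  have hcont : ContinuousOn (fun x : ℝ => x ^ (-(1 / 2) : ℝ)) (spectrum ℝ c) :=
    ContinuousOn.rpow_const continuousOn_id fun x hx => Or.inl (hpos x hx).ne'
  rw [CFC.rpow_eq_cfc_real hc, ← cfc_one ℝ c, ← cfc_sub _ _ c hcont]
  refine norm_cfc_le ht fun x hx => ?_
  rw [Real.norm_eq_abs, Real.rpow_neg (hpos x hx).le, ← Real.sqrt_eq_rpow]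
  exact abs_inv_sqrt_sub_one_le hδ (hspec x hx)

end CStarAlgebra

/-- An element within `ε ≤ 1/10` of a unitary is invertible, `a*a` is positive
invertible with `‖a*a - 1‖ ≤ 2ε + ε²`, and the unitary polar part `a·(a*a)^{-1/2}` is a
unitary within `3ε` of the original unitary. -/
theorem polar_part_close_to_unitary {A : Type*} [CStarAlgebra A]
    [PartialOrder A] [StarOrderedRing A]
    (u : A) (hu : u ∈ unitary A) (ε : ℝ) (hε0 : 0 ≤ ε) (hε : ε ≤ 1 / 10)
    (a : A) (ha : ‖a - u‖ ≤ ε) :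
    IsUnit a ∧ 0 ≤ star a * a ∧ IsUnit (star a * a) ∧
      ‖star a * a - 1‖ ≤ 2 * ε + ε ^ 2 ∧
      a * CFC.rpow (star a * a) (-(1 / 2) : ℝ) ∈ unitary A ∧
      ‖a * CFC.rpow (star a * a) (-(1 / 2) : ℝ) - u‖ ≤ 3 * ε := by
  have hunit : IsUnit a := isUnit_of_norm_sub_lt_one hu (by linarith)
  have hδ : ‖star a * a - 1‖ ≤ 2 * ε + ε ^ 2 :=
    (norm_star_mul_self_sub_one_le hu a).trans (by nlinarith [norm_nonneg (a - u)])
  have hr := norm_rpow_neg_half_sub_one_le (star_mul_self_nonneg a) (by nlinarith) hδ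
  refine ⟨hunit, star_mul_self_nonneg a, hunit.star.mul hunit, hδ,
    hunit.mul_rpow_neg_half_star_mul_self_mem_unitary, ?_⟩
  refine (norm_mul_sub_unitary_le hu a ((star a * a) ^ (-(1 / 2) : ℝ))).trans ?_
  linarith [mul_le_mul ha hr (norm_nonneg _) hε0, one_add_mul_inv_sqrt_le hε0 hε]
end

section
/- Let A be a unital C*-algebra, let e ∈ A be a projection, let u ∈ A be a unitary, let x, y, v ∈ A with ‖x‖ ≤ 1 and ‖v‖ ≤ 1, and let ε ≥ 0. Assume ‖v − e·u·e‖ ≤ ε, ‖e·u − u·e‖ ≤ ε, and ‖u·x·u* − y‖ ≤ ε. Then ‖v·(e·x·e)·v* − e·y·e‖ ≤ 5ε. -/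
private lemma norm_mul_le_of_le'' {A : Type*} [NonUnitalNormedRing A] {a b : A} {r s : ℝ}
    (ha : ‖a‖ ≤ r) (hb : ‖b‖ ≤ s) : ‖a * b‖ ≤ r * s :=
  (norm_mul_le a b).trans (mul_le_mul ha hb (norm_nonneg b) ((norm_nonneg a).trans ha))

private lemma norm_add5_le {A : Type*} [SeminormedAddCommGroup A] (a b c d f : A) :
    ‖a + b + c + d + f‖ ≤ ‖a‖ + ‖b‖ + ‖c‖ + ‖d‖ + ‖f‖ := by
  calc ‖a + b + c + d + f‖ ≤ ‖a + b + c + d‖ + ‖f‖ := norm_add_le _ _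
    _ ≤ (‖a + b + c‖ + ‖d‖) + ‖f‖ := by gcongr; exact norm_add_le _ _
    _ ≤ ((‖a + b‖ + ‖c‖) + ‖d‖) + ‖f‖ := by gcongr; exact norm_add_le _ _
    _ ≤ (((‖a‖ + ‖b‖) + ‖c‖) + ‖d‖) + ‖f‖ := by gcongr; exact norm_add_le _ _

/-- If a unitary `u` `ε`-intertwines `x` with `y` and almost commutes with a
projection `e`, then any contraction `v` within `ε` of `e·u·e` `5ε`-intertwines the
compressions `e·x·e` and `e·y·e`. -/
theorem compressed_intertwiner_estimate {A : Type*} [CStarAlgebra A]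
    (ε : ℝ) (hε : 0 ≤ ε)
    (e : A) (he : IsSelfAdjoint e) (he2 : e * e = e)
    (u : A) (hu : u ∈ unitary A)
    (x y v : A) (hx : ‖x‖ ≤ 1) (hv : ‖v‖ ≤ 1)
    (hveue : ‖v - e * u * e‖ ≤ ε)
    (hue : ‖e * u - u * e‖ ≤ ε)
    (hint : ‖u * x * star u - y‖ ≤ ε) :
    ‖v * (e * x * e) * star v - e * y * e‖ ≤ 5 * ε := by
  rcases subsingleton_or_nontrivial A with hA | hA
  · rw [Subsingleton.elim (v * (e * x * e) * star v - e * y * e) 0, norm_zero]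
    positivity
  obtain ⟨hu1, hu2⟩ := Unitary.mem_iff.mp hu
  have hes : star e = e := he.star_eq
  have hnu : ‖u‖ = 1 := CStarRing.norm_of_mem_unitary hu
  have hnus : ‖star u‖ = 1 := by rw [norm_star]; exact hnu
  have hne : ‖e‖ ≤ 1 := by
    have h := CStarRing.norm_star_mul_self (x := e)
    rw [hes, he2] at h
    nlinarith [norm_nonneg e]
  have hcanc : ∀ a : A, star u * (u * a) = a := fun a => by
    rw [← mul_assoc, hu1, one_mul]
  have hee : ∀ a : A, e * (e * a) = e * a := fun a => by rw [← mul_assoc, he2]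
  set g := u * e * star u with hgdef
  set z := u * x * star u with hzdef
  -- norm estimates
  have hexe : ‖e * x * e‖ ≤ 1 := by
    have := norm_mul_le_of_le'' (norm_mul_le_of_le'' hne hx) hne
    linarith
  have heue : ‖e * u * e‖ ≤ 1 := by
    have := norm_mul_le_of_le'' (norm_mul_le_of_le'' hne hnu.le) hne
    linarith
  have hz1 : ‖z‖ ≤ 1 := by
    have := norm_mul_le_of_le'' (norm_mul_le_of_le'' hnu.le hx) hnus.le
    rw [hzdef]; linarith
  have hg1 : ‖g‖ ≤ 1 := by
    have := norm_mul_le_of_le'' (norm_mul_le_of_le'' hnu.le hne) hnus.le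
    rw [hgdef]; linarith
  have hge : ‖g - e‖ ≤ ε := by
    have hid : g - e = (u * e - e * u) * star u := by
      rw [hgdef, sub_mul, mul_assoc e u (star u), hu2, mul_one]
    rw [hid]
    calc ‖(u * e - e * u) * star u‖ ≤ ‖u * e - e * u‖ * ‖star u‖ := norm_mul_le _ _
      _ = ‖e * u - u * e‖ := by rw [hnus, mul_one, norm_sub_rev]
      _ ≤ ε := hue
  have hvs : ‖star v - e * star u * e‖ ≤ ε := by
    have h : e * star u * e = star (e * u * e) := by
      simp [star_mul, hes, mul_assoc]
    rw [h, ← star_sub, norm_star]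
    exact hveue
  have hsv : ‖star v‖ ≤ 1 := by rw [norm_star]; exact hv
  -- key algebraic identity
  have key : v * (e * x * e) * star v - e * y * e =
      (v - e * u * e) * (e * x * e) * star v
      + (e * u * e) * (e * x * e) * (star v - e * star u * e)
      + e * ((g - e) * (z * (g * e)))
      + e * (z * ((g - e) * e))
      + e * ((z - y) * e) := by
    simp only [hgdef, hzdef, sub_mul, mul_sub, mul_assoc, hcanc, hee, he2]
    abel
  have n1 : ‖(v - e * u * e) * (e * x * e) * star v‖ ≤ ε := by
    have := norm_mul_le_of_le'' (norm_mul_le_of_le'' hveue hexe) hsv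
    linarith
  have n2 : ‖(e * u * e) * (e * x * e) * (star v - e * star u * e)‖ ≤ ε := by
    have := norm_mul_le_of_le'' (norm_mul_le_of_le'' heue hexe) hvs
    linarith
  have n3 : ‖e * ((g - e) * (z * (g * e)))‖ ≤ ε := by
    have := norm_mul_le_of_le'' hne
      (norm_mul_le_of_le'' hge (norm_mul_le_of_le'' hz1 (norm_mul_le_of_le'' hg1 hne)))
    linarith
  have n4 : ‖e * (z * ((g - e) * e))‖ ≤ ε := by
    have := norm_mul_le_of_le'' hne
      (norm_mul_le_of_le'' hz1 (norm_mul_le_of_le'' hge hne))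
    linarith
  have n5 : ‖e * ((z - y) * e)‖ ≤ ε := by
    have := norm_mul_le_of_le'' hne (norm_mul_le_of_le'' hint hne)
    linarith
  rw [key]
  have := norm_add5_le ((v - e * u * e) * (e * x * e) * star v)
    ((e * u * e) * (e * x * e) * (star v - e * star u * e))
    (e * ((g - e) * (z * (g * e)))) (e * (z * ((g - e) * e))) (e * ((z - y) * e))
  linarith
end

section
/- Let A be a unital C*-algebra, let p₁, p₂ ∈ A be projections, let q₁, q₂ ∈ A be self-adjoint elements with ‖q₁ − p₁‖ ≤ δ and ‖q₂ − p₂‖ ≤ δ, where 0 ≤ δ ≤ 1/2. In the C*-algebra of 2×2 matrices over A, set v_p := [[p₂, 1−p₂],[1−p₂, p₂]], v_q := [[q₂, 1−q₂],[1−q₂, q₂]], d_p := diag(p₁, 1−p₂), and d_q := diag(q₁, 1−q₂). Then ‖v_q·d_q·v_q − v_p·d_p·v_p‖ ≤ 10δ. -/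
/-!
Write `v_q d_q v_q - v_p d_p v_p = v_q (d_q - d_p) v_q + v_q d_p (v_q - v_p) + (v_q - v_p) d_p v_p`.
The matrix `v_p` is a self-adjoint unitary, so `‖v_p‖ ≤ 1`. Its perturbation factors as
`v_q - v_p = diag(q₂ - p₂, q₂ - p₂) (1 - J)` with `J` the flip `!![0, 1; 1, 0]`, so
`‖v_q - v_p‖ ≤ 2δ` and `‖v_q‖ ≤ 1 + 2δ ≤ 2`. A diagonal matrix `D` whose entries have norm at
most `r` has `‖D‖ ≤ r`: each `r² - aᵢ⋆aᵢ` is positive, hence of the form `sᵢ⋆sᵢ`, so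
`r² - D⋆D = S⋆S` for `S = diag(sᵢ)`. This gives `‖d_p‖ ≤ 1` and `‖d_q - d_p‖ ≤ δ`, and the three
terms are bounded by `4δ`, `4δ` and `2δ`.
-/

open Matrix

lemma norm_mul_mul_sub_mul_mul_le {R : Type*} [NonUnitalSeminormedRing R] (u v d e : R) :
    ‖v * e * v - u * d * u‖ ≤
      ‖v‖ * ‖e - d‖ * ‖v‖ + ‖v‖ * ‖d‖ * ‖v - u‖ + ‖v - u‖ * ‖d‖ * ‖u‖ := by
  have h : v * e * v - u * d * u = v * (e - d) * v + v * d * (v - u) + (v - u) * d * u := by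
    noncomm_ring
  rw [h]
  exact norm_add₃_le.trans (add_le_add_three (norm_mul₃_le ..) (norm_mul₃_le ..) (norm_mul₃_le ..))

lemma reflection_mem_unitary {R : Type*} [Ring R] [StarRing R] {p : R} (hp : IsStarProjection p) :
    !![p, 1 - p; 1 - p, p] ∈ unitary (Matrix (Fin 2) (Fin 2) R) := by
  have hsa : star !![p, 1 - p; 1 - p, p] = !![p, 1 - p; 1 - p, p] := by
    ext i j; fin_cases i <;> fin_cases j <;> simp [hp.isSelfAdjoint.star_eq]
  have hsq : !![p, 1 - p; 1 - p, p] * !![p, 1 - p; 1 - p, p] = 1 := by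
    rw [mul_fin_two, one_fin_two, hp.mul_one_sub_self, hp.one_sub_mul_self,
      hp.isIdempotentElem.eq, hp.one_sub.isIdempotentElem.eq]
    simp
  rw [Unitary.mem_iff, hsa]
  exact ⟨hsq, hsq⟩

section CStarAlgebra

variable {A B : Type*} [CStarAlgebra A] [CStarAlgebra B]

lemma norm_le_one_of_mem_unitary {u : B} (hu : u ∈ unitary B) : ‖u‖ ≤ 1 := by
  rw [← one_mul u, CStarRing.norm_mul_mem_unitary _ hu]
  exact IsStarProjection.norm_le _ (.one B)

lemma norm_le_of_star_mul_self_add_star_mul_self_eq {x y : B} {r : ℝ} (hr : 0 ≤ r)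
    (h : star x * x + star y * y = algebraMap ℝ B (r ^ 2)) : ‖x‖ ≤ r := by
  let _ := CStarAlgebra.spectralOrder B
  have := CStarAlgebra.spectralOrderedRing B
  have hle : star x * x ≤ algebraMap ℝ B (r ^ 2) :=
    h ▸ le_add_of_nonneg_right (star_mul_self_nonneg y)
  rw [← CStarAlgebra.norm_le_iff_le_algebraMap _ (by positivity), CStarRing.norm_star_mul_self,
    ← sq] at hle
  exact (pow_le_pow_iff_left₀ (norm_nonneg x) hr two_ne_zero).mp hle

lemma exists_star_mul_self_add_star_mul_self_eq {a : A} {r : ℝ} (ha : ‖a‖ ≤ r) :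
    ∃ s : A, star a * a + star s * s = algebraMap ℝ A (r ^ 2) := by
  let _ := CStarAlgebra.spectralOrder A
  have := CStarAlgebra.spectralOrderedRing A
  have hle : star a * a ≤ algebraMap ℝ A (r ^ 2) :=
    CStarAlgebra.star_mul_le_algebraMap_norm_sq.trans <|
      algebraMap_mono A (pow_le_pow_left₀ (norm_nonneg a) ha 2)
  obtain ⟨s, hs⟩ := CStarAlgebra.nonneg_iff_eq_star_mul_self.mp (sub_nonneg.mpr hle)
  exact ⟨s, by rw [← hs, add_sub_cancel]⟩

lemma norm_map_diagonal_le {n F : Type*} [Fintype n] [DecidableEq n]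
    [FunLike F (Matrix n n A) B] [AlgHomClass F ℂ (Matrix n n A) B]
    [StarHomClass F (Matrix n n A) B] (φ : F) {d : n → A} {r : ℝ} (hr : 0 ≤ r)
    (hd : ∀ i, ‖d i‖ ≤ r) : ‖φ (diagonal d)‖ ≤ r := by
  choose s hs using fun i ↦ exists_star_mul_self_add_star_mul_self_eq (hd i)
  refine norm_le_of_star_mul_self_add_star_mul_self_eq (y := φ (diagonal s)) hr ?_
  rw [← map_star, ← map_star, ← map_mul, ← map_mul, ← map_add, star_eq_conjTranspose,
    star_eq_conjTranspose, diagonal_conjTranspose, diagonal_conjTranspose, diagonal_mul_diagonal,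
    diagonal_mul_diagonal, diagonal_add]
  simp only [Pi.star_apply, hs]
  rw [show diagonal (fun _ ↦ algebraMap ℝ A (r ^ 2)) = algebraMap ℝ (Matrix n n A) (r ^ 2) from
    (algebraMap_eq_diagonal _).symm, IsScalarTower.algebraMap_apply ℝ ℂ, AlgHomClass.commutes,
    ← IsScalarTower.algebraMap_apply]

variable {F : Type*} [FunLike F (Matrix (Fin 2) (Fin 2) A) B]
  [AlgHomClass F ℂ (Matrix (Fin 2) (Fin 2) A) B] [StarHomClass F (Matrix (Fin 2) (Fin 2) A) B]

lemma norm_map_diag_fin_two_le (φ : F) {a b : A} {r : ℝ} (ha : ‖a‖ ≤ r) (hb : ‖b‖ ≤ r) :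
    ‖φ !![a, 0; 0, b]‖ ≤ r := by
  rw [← diagonal_vec2]
  exact norm_map_diagonal_le φ ((norm_nonneg a).trans ha) (Fin.forall_fin_two.mpr ⟨ha, hb⟩)

lemma norm_map_reflection_le_one (φ : F) {p : A} (hp : IsStarProjection p) :
    ‖φ !![p, 1 - p; 1 - p, p]‖ ≤ 1 :=
  norm_le_one_of_mem_unitary (Unitary.map_mem φ (reflection_mem_unitary hp))

lemma norm_map_reflection_sub_le (φ : F) (p q : A) :
    ‖φ !![q, 1 - q; 1 - q, q] - φ !![p, 1 - p; 1 - p, p]‖ ≤ 2 * ‖q - p‖ := by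
  have hflip : ‖φ !![0, 1; 1, 0]‖ ≤ 1 := by
    simpa using norm_map_reflection_le_one φ (.zero A)
  have hdiag : ‖φ (diagonal fun _ ↦ q - p)‖ ≤ ‖q - p‖ :=
    norm_map_diagonal_le φ (norm_nonneg _) fun _ ↦ le_rfl
  have hfactor : !![q, 1 - q; 1 - q, q] - !![p, 1 - p; 1 - p, p] =
      diagonal (fun _ ↦ q - p) - diagonal (fun _ ↦ q - p) * !![0, 1; 1, 0] := by
    rw [diagonal_fin_two, mul_fin_two]
    ext i j; fin_cases i <;> fin_cases j <;> simp
  rw [← map_sub, hfactor, map_sub, map_mul, two_mul]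
  exact (norm_sub_le _ _).trans (add_le_add hdiag ((norm_mul_le _ _).trans
    ((mul_le_of_le_one_right (norm_nonneg _) hflip).trans hdiag)))

end CStarAlgebra

theorem rotated_difference_class_perturbation_general {A B : Type*}
    [CStarAlgebra A] [CStarAlgebra B]
    (φ : Matrix (Fin 2) (Fin 2) A ≃⋆ₐ[ℂ] B)
    (p₁ p₂ : A) (hp₁ : IsSelfAdjoint p₁) (hp₁idem : p₁ * p₁ = p₁)
    (hp₂ : IsSelfAdjoint p₂) (hp₂idem : p₂ * p₂ = p₂)
    (q₁ q₂ : A)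
    (δ : ℝ) (hδ : δ ≤ 1 / 2)
    (h₁ : ‖q₁ - p₁‖ ≤ δ) (h₂ : ‖q₂ - p₂‖ ≤ δ) :
    ‖φ (!![q₂, 1 - q₂; 1 - q₂, q₂] * !![q₁, 0; 0, 1 - q₂] * !![q₂, 1 - q₂; 1 - q₂, q₂])
      - φ (!![p₂, 1 - p₂; 1 - p₂, p₂] * !![p₁, 0; 0, 1 - p₂] * !![p₂, 1 - p₂; 1 - p₂, p₂])‖
      ≤ 10 * δ := by
  have hδ0 : 0 ≤ δ := (norm_nonneg _).trans h₁
  have hP₁ : IsStarProjection p₁ := ⟨hp₁idem, hp₁⟩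
  have hP₂ : IsStarProjection p₂ := ⟨hp₂idem, hp₂⟩
  have hvp := norm_map_reflection_le_one φ hP₂
  have hvqp : ‖φ !![q₂, 1 - q₂; 1 - q₂, q₂] - φ !![p₂, 1 - p₂; 1 - p₂, p₂]‖ ≤ 2 * δ := by
    linarith [norm_map_reflection_sub_le φ p₂ q₂]
  have hvq : ‖φ !![q₂, 1 - q₂; 1 - q₂, q₂]‖ ≤ 2 := by
    linarith [norm_le_norm_add_norm_sub' (φ !![q₂, 1 - q₂; 1 - q₂, q₂])
      (φ !![p₂, 1 - p₂; 1 - p₂, p₂])]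
  have hdp : ‖φ !![p₁, 0; 0, 1 - p₂]‖ ≤ 1 :=
    norm_map_diag_fin_two_le φ (hP₁.norm_le _) (hP₂.one_sub.norm_le _)
  have hdqp : ‖φ !![q₁, 0; 0, 1 - q₂] - φ !![p₁, 0; 0, 1 - p₂]‖ ≤ δ := by
    rw [← map_sub, show !![q₁, 0; 0, 1 - q₂] - !![p₁, 0; 0, 1 - p₂] = !![q₁ - p₁, 0; 0, p₂ - q₂] by
      ext i j; fin_cases i <;> fin_cases j <;> simp]
    exact norm_map_diag_fin_two_le φ h₁ (norm_sub_rev p₂ q₂ ▸ h₂)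
  simp only [map_mul]
  refine (norm_mul_mul_sub_mul_mul_le _ _ _ _).trans ?_
  calc _ ≤ 2 * δ * 2 + 2 * 1 * (2 * δ) + 2 * δ * 1 * 1 := by gcongr
    _ = 10 * δ := by ring

/-- perturbation estimate for the rotated difference-class representatives in
2×2 matrices over a unital C*-algebra.  Since the C*-norm on `M₂(A)` is unique, we express
it via an arbitrary star-algebra isomorphism `φ` of `M₂(A)` with a C*-algebra `B`. -/
theorem rotated_difference_class_perturbation {A B : Type*}
    [CStarAlgebra A] [CStarAlgebra B]
    (φ : Matrix (Fin 2) (Fin 2) A ≃⋆ₐ[ℂ] B)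
    (p₁ p₂ : A) (hp₁ : IsSelfAdjoint p₁) (hp₁idem : p₁ * p₁ = p₁)
    (hp₂ : IsSelfAdjoint p₂) (hp₂idem : p₂ * p₂ = p₂)
    (q₁ q₂ : A) (hq₁ : IsSelfAdjoint q₁) (hq₂ : IsSelfAdjoint q₂)
    (δ : ℝ) (hδ0 : 0 ≤ δ) (hδ : δ ≤ 1 / 2)
    (h₁ : ‖q₁ - p₁‖ ≤ δ) (h₂ : ‖q₂ - p₂‖ ≤ δ) :
    ‖φ (!![q₂, 1 - q₂; 1 - q₂, q₂] * !![q₁, 0; 0, 1 - q₂] * !![q₂, 1 - q₂; 1 - q₂, q₂])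
      - φ (!![p₂, 1 - p₂; 1 - p₂, p₂] * !![p₁, 0; 0, 1 - p₂] * !![p₂, 1 - p₂; 1 - p₂, p₂])‖
      ≤ 10 * δ :=
  rotated_difference_class_perturbation_general φ p₁ p₂ hp₁ hp₁idem hp₂ hp₂idem q₁ q₂ δ hδ h₁ h₂
end

section
/- Let Γ be a group and let (N_n)_{n∈ℕ} be a sequence of normal subgroups of Γ with N_{n+1} ≤ N_n for all n and ⋂_{n} N_n = {1}. For n ∈ ℕ let q_n : Γ → Γ/N_n denote the quotient homomorphism. Then for every ε > 0, every finite subset F ⊆ Γ, and every square-summable function ξ : Γ → ℂ (i.e., ∑_{x∈Γ} |ξ(x)|² < ∞), there exist n ∈ ℕ and a finitely supported function η : Γ/N_n → ℂ with ∑_{y} |η(y)|² ≤ ∑_{x} |ξ(x)|², such that for all γ ∈ F, | ∑'_{x∈Γ} ξ(γ⁻¹·x)·conj(ξ(x)) − ∑_{y∈Γ/N_n} η(q_n(γ)⁻¹·y)·conj(η(y)) | ≤ ε. -/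
/-!
Truncating `ξ` to a finite set `A` changes its matrix coefficients by at most
`2 ‖ξ - ξ|_A‖₂ ‖ξ‖₂` (Cauchy–Schwarz), which tends to `0` as `A` grows. Because the `Nₙ`
decrease to `{1}`, for large `n` the quotient map `qₙ` is injective on the finite set
`A ∪ F⁻¹A`; pushing `ξ|_A` forward along `qₙ` then preserves its `ℓ²`-norm and its matrix
coefficients at every `γ ∈ F`.
-/

open scoped ComplexConjugate Pointwise
open Filter Topology Finset

section L2

variable {ι : Type*} {f g : ι → ℂ}

lemma summable_and_norm_tsum_mul_conj_le (hf : Summable fun i => ‖f i‖ ^ 2)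
    (hg : Summable fun i => ‖g i‖ ^ 2) :
    (Summable fun i => f i * conj (g i)) ∧
      ‖∑' i, f i * conj (g i)‖ ≤ √(∑' i, ‖f i‖ ^ 2) * √(∑' i, ‖g i‖ ^ 2) := by
  have hnorm (i : ι) : ‖f i * conj (g i)‖ = ‖f i‖ * ‖g i‖ := by
    rw [norm_mul, RCLike.norm_conj]
  obtain ⟨hsum, hle⟩ := Real.summable_and_inner_le_Lp_mul_Lq_tsum_of_nonneg
    Real.HolderConjugate.two_two (f := fun i => ‖f i‖) (g := fun i => ‖g i‖)
    (fun _ => norm_nonneg _) (fun _ => norm_nonneg _)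
    (by simpa only [Real.rpow_two] using hf) (by simpa only [Real.rpow_two] using hg)
  simp_rw [← hnorm] at hsum hle
  refine ⟨hsum.of_norm, (norm_tsum_le_tsum_norm hsum).trans ?_⟩
  simpa only [Real.rpow_two, Real.sqrt_eq_rpow, one_div] using hle

lemma summable_norm_sub_sq (hf : Summable fun i => ‖f i‖ ^ 2)
    (hg : Summable fun i => ‖g i‖ ^ 2) : Summable fun i => ‖(f - g) i‖ ^ 2 := by
  refine .of_nonneg_of_le (fun _ => sq_nonneg _) (fun i => ?_) ((hf.add hg).mul_left 2)
  rw [Pi.sub_apply]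
  nlinarith [norm_sub_le (f i) (g i), norm_nonneg (f i - g i), sq_nonneg (‖f i‖ - ‖g i‖)]

end L2

section Truncation

variable {α : Type*}

noncomputable def truncate {M : Type*} [Zero M] (A : Finset α) (f : α → M) : α →₀ M :=
  Finsupp.indicator A fun x _ => f x

lemma coe_truncate {M : Type*} [Zero M] (A : Finset α) (f : α → M) :
    ⇑(truncate A f) = Set.indicator A f := by
  classical
  ext x
  simp [truncate, Finsupp.indicator_apply, Set.indicator_apply]

lemma support_truncate_subset {M : Type*} [Zero M] (A : Finset α) (f : α → M) :
    (truncate A f).support ⊆ A :=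
  Finsupp.support_indicator_subset _ _

lemma summable_norm_sq_truncate (A : Finset α) (f : α → ℂ) :
    Summable fun x => ‖truncate A f x‖ ^ 2 :=
  summable_of_ne_finset_zero (s := A) fun x hx => by simp [coe_truncate, hx]

lemma tsum_norm_sq_truncate_le {f : α → ℂ} (hf : Summable fun x => ‖f x‖ ^ 2) (A : Finset α) :
    ∑' x, ‖truncate A f x‖ ^ 2 ≤ ∑' x, ‖f x‖ ^ 2 := by
  refine (summable_norm_sq_truncate A f).tsum_le_tsum (fun x => ?_) hf
  rw [coe_truncate]
  gcongr
  exact norm_indicator_le_norm_self f x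

lemma tsum_norm_sq_sub_truncate {f : α → ℂ} (A : Finset α) :
    ∑' x, ‖(f - truncate A f) x‖ ^ 2 = ∑' x : {x // x ∉ A}, ‖f x‖ ^ 2 := by
  have h (x : α) : ‖(f - truncate A f) x‖ ^ 2 = Set.indicator (↑A)ᶜ (‖f ·‖ ^ 2) x := by
    by_cases hx : x ∈ A <;> simp [coe_truncate, hx]
  simp_rw [h, ← _root_.tsum_subtype]
  rfl

end Truncation

section Regular

variable {G : Type*} [Group G]

/-- The matrix coefficient `⟨λ(γ) f, g⟩` of the left regular representation. -/
noncomputable def regularCoeff (γ : G) (f g : G → ℂ) : ℂ := ∑' x, f (γ⁻¹ * x) * conj (g x)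

lemma summable_and_norm_regularCoeff_le {f g : G → ℂ} (hf : Summable fun x => ‖f x‖ ^ 2)
    (hg : Summable fun x => ‖g x‖ ^ 2) (γ : G) :
    (Summable fun x => f (γ⁻¹ * x) * conj (g x)) ∧
      ‖regularCoeff γ f g‖ ≤ √(∑' x, ‖f x‖ ^ 2) * √(∑' x, ‖g x‖ ^ 2) := by
  rw [← (Equiv.mulLeft γ⁻¹).tsum_eq fun x => ‖f x‖ ^ 2]
  exact summable_and_norm_tsum_mul_conj_le ((Equiv.mulLeft γ⁻¹).summable_iff.2 hf) hg

lemma regularCoeff_sub_regularCoeff {f g : G → ℂ} (hf : Summable fun x => ‖f x‖ ^ 2)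
    (hg : Summable fun x => ‖g x‖ ^ 2) (γ : G) :
    regularCoeff γ f f - regularCoeff γ g g =
      regularCoeff γ (f - g) f + regularCoeff γ g (f - g) := by
  have hfg := summable_norm_sub_sq hf hg
  unfold regularCoeff
  rw [← (summable_and_norm_regularCoeff_le hf hf γ).1.tsum_sub
      (summable_and_norm_regularCoeff_le hg hg γ).1,
    ← (summable_and_norm_regularCoeff_le hfg hf γ).1.tsum_add
      (summable_and_norm_regularCoeff_le hg hfg γ).1]
  refine tsum_congr fun x => ?_
  simp only [Pi.sub_apply, map_sub]
  ring

lemma norm_regularCoeff_sub_regularCoeff_le {f g : G → ℂ} (hf : Summable fun x => ‖f x‖ ^ 2)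
    (hg : Summable fun x => ‖g x‖ ^ 2) (γ : G) :
    ‖regularCoeff γ f f - regularCoeff γ g g‖ ≤
      √(∑' x, ‖(f - g) x‖ ^ 2) * (√(∑' x, ‖f x‖ ^ 2) + √(∑' x, ‖g x‖ ^ 2)) := by
  have hfg := summable_norm_sub_sq hf hg
  rw [regularCoeff_sub_regularCoeff hf hg]
  refine (norm_add_le _ _).trans ?_
  have h1 := (summable_and_norm_regularCoeff_le hfg hf γ).2
  have h2 := (summable_and_norm_regularCoeff_le hg hfg γ).2
  linarith

lemma tendsto_regularCoeff_truncate {f : G → ℂ} (hf : Summable fun x => ‖f x‖ ^ 2) (γ : G) :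
    Tendsto (fun A : Finset G => regularCoeff γ (truncate A f) (truncate A f)) atTop
      (𝓝 (regularCoeff γ f f)) := by
  have htail : Tendsto (fun A : Finset G =>
      √(∑' x : {x // x ∉ A}, ‖f x‖ ^ 2) * (2 * √(∑' x, ‖f x‖ ^ 2))) atTop (𝓝 0) := by
    simpa using ((tendsto_tsum_compl_atTop_zero fun x => ‖f x‖ ^ 2).sqrt).mul_const
      (2 * √(∑' x, ‖f x‖ ^ 2))
  rw [tendsto_iff_norm_sub_tendsto_zero]
  refine squeeze_zero (fun _ => norm_nonneg _) (fun A => ?_) htail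
  rw [norm_sub_rev, ← tsum_norm_sq_sub_truncate]
  refine (norm_regularCoeff_sub_regularCoeff_le hf (summable_norm_sq_truncate A f) γ).trans ?_
  rw [two_mul]
  gcongr _ * (_ + √?_)
  exact tsum_norm_sq_truncate_le hf A

end Regular

section Transport

lemma tsum_norm_sq_mapDomain {α β : Type*} (q : α → β) (f : α →₀ ℂ)
    (hq : Set.InjOn q f.support) :
    ∑' y, ‖f.mapDomain q y‖ ^ 2 = ∑' x, ‖f x‖ ^ 2 := by
  classical
  rw [tsum_eq_sum (s := (f.mapDomain q).support) (by simp),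
    tsum_eq_sum (s := f.support) (by simp), Finsupp.mapDomain_support_of_injOn f hq,
    Finset.sum_image hq]
  refine Finset.sum_congr rfl fun x hx => ?_
  rw [Finsupp.mapDomain_apply' _ f subset_rfl hq hx]

variable {G Q : Type*} [Group G] [Group Q]

/-- Injectivity on `γ⁻¹ • supp f` guarantees that no point of `supp f` other than `γ⁻¹ x` itself
lies over `q (γ⁻¹ x)`, so the pushforward reads `f (γ⁻¹ x)` there even when it vanishes. -/
lemma regularCoeff_mapDomain (q : G →* Q) (f : G →₀ ℂ) {S : Set G} (hq : Set.InjOn q S)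
    (γ : G) (hS : ∀ x ∈ f.support, x ∈ S ∧ γ⁻¹ * x ∈ S) :
    regularCoeff (q γ) (f.mapDomain q) (f.mapDomain q) = regularCoeff γ f f := by
  classical
  have hsupp : ↑f.support ⊆ S := fun x hx => (hS x hx).1
  unfold regularCoeff
  rw [tsum_eq_sum (s := (f.mapDomain q).support) (by simp_all),
    tsum_eq_sum (s := f.support) (by simp_all), Finsupp.mapDomain_support_of_injOn f (hq.mono hsupp),
    Finset.sum_image (hq.mono hsupp)]
  refine Finset.sum_congr rfl fun x hx => ?_
  rw [← map_inv, ← map_mul, Finsupp.mapDomain_apply' S f hsupp hq (hS x hx).2,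
    Finsupp.mapDomain_apply' S f hsupp hq (hS x hx).1]

end Transport

lemma eventually_injOn_mk_of_antitone {G ι : Type*} [Group G] [Preorder ι] {N : ι → Subgroup G}
    (hN : Antitone N) (hbot : ⨅ i, N i = ⊥) {S : Set G} (hS : S.Finite) :
    ∀ᶠ i in atTop, Set.InjOn ((↑) : G → G ⧸ N i) S := by
  have hpair : ∀ p ∈ S ×ˢ S, ∀ᶠ i in atTop, ((p.1 : G ⧸ N i) = p.2 → p.1 = p.2) := by
    rintro ⟨a, b⟩ -
    by_cases hab : a = b
    · exact .of_forall fun _ _ => hab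
    obtain ⟨i, hi⟩ : ∃ i, a⁻¹ * b ∉ N i := by
      by_contra! h
      exact hab (inv_mul_eq_one.1 (by simpa [hbot] using Subgroup.mem_iInf.2 h))
    filter_upwards [eventually_ge_atTop i] with j hij hq
    exact absurd (QuotientGroup.eq.1 hq) fun h => hi (hN hij h)
  filter_upwards [(Filter.eventually_all_finite (hS.prod hS)).2 hpair] with i hi a ha b hb
  exact hi (a, b) ⟨ha, hb⟩

/-- the left regular representation of a group `Γ` is weakly contained in the
direct sum of the regular representations of the quotients `Γ/Nₙ` along a decreasing
sequence of normal subgroups with trivial intersection: every matrix coefficient of `λ_Γ`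
at a square-summable `ξ`, on a finite set `F`, is `ε`-approximated by a matrix coefficient
of some `λ_{Γ/Nₙ}` at a finitely supported `η` with `‖η‖₂ ≤ ‖ξ‖₂`. -/
theorem regular_rep_weakly_contained_in_quotients {Γ : Type*} [Group Γ]
    (N : ℕ → Subgroup Γ) [∀ n, (N n).Normal]
    (hdec : ∀ n, N (n + 1) ≤ N n) (hinter : ⨅ n, N n = ⊥)
    (ε : ℝ) (hε : 0 < ε) (F : Finset Γ)
    (ξ : Γ → ℂ) (hξ : Summable fun x => ‖ξ x‖ ^ 2) :
    ∃ (n : ℕ) (η : Γ ⧸ N n → ℂ), (Function.support η).Finite ∧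
      (∑' y, ‖η y‖ ^ 2) ≤ (∑' x, ‖ξ x‖ ^ 2) ∧
      ∀ γ ∈ F,
        ‖(∑' x : Γ, ξ (γ⁻¹ * x) * conj (ξ x)) -
            ∑' y : Γ ⧸ N n, η ((QuotientGroup.mk' (N n) γ)⁻¹ * y) * conj (η y)‖ ≤ ε := by
  classical
  obtain ⟨A, hA⟩ := ((eventually_all_finset F).2 fun γ _ =>
    (tendsto_regularCoeff_truncate hξ γ).eventually (Metric.closedBall_mem_nhds _ hε)).exists
  obtain ⟨n, hn⟩ := (eventually_injOn_mk_of_antitone (antitone_nat_of_succ_le hdec) hinter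
    (A ∪ F⁻¹ * A).finite_toSet).exists
  have hA' : ∀ x ∈ (truncate A ξ).support, x ∈ A := support_truncate_subset A ξ
  refine ⟨n, (truncate A ξ).mapDomain (QuotientGroup.mk' (N n)), Finsupp.hasFiniteSupport _, ?_,
    fun γ hγ => ?_⟩
  · rw [tsum_norm_sq_mapDomain (QuotientGroup.mk' (N n)) _
      (hn.mono fun x hx => mem_union_left _ (hA' x hx))]
    exact tsum_norm_sq_truncate_le hξ A
  · have hγA := hA γ hγ
    rw [dist_comm, dist_eq_norm, ← regularCoeff_mapDomain (QuotientGroup.mk' (N n)) _ hn γ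
      fun x hx => ⟨mem_union_left _ (hA' x hx),
        mem_union_right _ (mul_mem_mul (inv_mem_inv hγ) (hA' x hx))⟩] at hγA
    exact hγA
end
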